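/- arXiv:1901.08215 — 7 statements merged into one kernel-verified Lean document; each statement's English description precedes it below -/
import Mathlib

section
/- Let f : ℝ^m → ℝ be differentiable with β-Lipschitz continuous gradient (β > 0), attaining its infimum f⋆ at some point, and satisfying the Polyak–Łojasiewicz condition with parameter α > 0, i.e. 2α(f(x) − f⋆) ≤ ‖∇f(x)‖₂² for all x. Let η ∈ (0, 1/(2β)) and set σ = 1 − αη(1 − 2ηβ). Then σ < 1, and for every x, ε ∈ ℝ^m the perturbed gradient step x⁺ = x − η∇f(x) + ε satisfies f(x⁺) − f⋆ ≤ σ(f(x) − f⋆) + (2/η + β)‖ε‖₂². -/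
open InnerProductSpace

local notation "⟪" x ", " y "⟫" => @inner ℝ _ _ x y

/-- Descent lemma: for a function with `β`-Lipschitz gradient. -/
lemma descent_lemma {m : ℕ} (f : EuclideanSpace ℝ (Fin m) → ℝ) (β : ℝ) (hβ : 0 ≤ β)
    (hdiff : Differentiable ℝ f)
    (hlip : ∀ x y : EuclideanSpace ℝ (Fin m),
      ‖gradient f x - gradient f y‖ ≤ β * ‖x - y‖)
    (x v : EuclideanSpace ℝ (Fin m)) :
    f (x + v) ≤ f x + ⟪gradient f x, v⟫ + β / 2 * ‖v‖ ^ 2 := by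
  set c : ℝ := ⟪gradient f x, v⟫ with hc
  set g : ℝ → ℝ := fun t => f (x + t • v) - (f x + t * c + β * ‖v‖ ^ 2 / 2 * t ^ 2) with hg
  have hline : ∀ t : ℝ, HasDerivAt (fun t : ℝ => x + t • v) v t := fun t => by
    simpa using ((hasDerivAt_id t).smul_const v).const_add x
  have hφ : ∀ t : ℝ, HasDerivAt (fun t => f (x + t • v)) ⟪gradient f (x + t • v), v⟫ t := by
    intro t
    have h1 := (hdiff (x + t • v)).hasGradientAt.hasFDerivAt.comp_hasDerivAt t (hline t)
    simpa [toDual_apply_apply, Function.comp_def] using h1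
  have hg' : ∀ t : ℝ, HasDerivAt g (⟪gradient f (x + t • v), v⟫ - (c + β * ‖v‖ ^ 2 / 2 * (2 * t))) t := by
    intro t
    have hp : HasDerivAt (fun t : ℝ => f x + t * c + β * ‖v‖ ^ 2 / 2 * t ^ 2)
        (c + β * ‖v‖ ^ 2 / 2 * (2 * t)) t := by
      have h1 : HasDerivAt (fun t : ℝ => t * c) c t := by
        simpa using (hasDerivAt_id t).mul_const c
      have h2 : HasDerivAt (fun t : ℝ => β * ‖v‖ ^ 2 / 2 * t ^ 2)
          (β * ‖v‖ ^ 2 / 2 * (2 * t)) t := by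
        simpa [mul_comm, pow_one] using (hasDerivAt_pow 2 t).const_mul (β * ‖v‖ ^ 2 / 2)
      simpa [Pi.add_def] using ((h1.const_add (f x)).add h2)
    exact (hφ t).sub hp
  have hmono : AntitoneOn g (Set.Icc (0:ℝ) 1) := by
    apply antitoneOn_of_deriv_nonpos (convex_Icc 0 1)
    · exact fun t _ => ((hg' t).continuousAt).continuousWithinAt
    · exact fun t _ => ((hg' t).differentiableAt).differentiableWithinAt
    · intro t ht
      rw [interior_Icc] at ht
      rw [(hg' t).deriv]
      have hb : ⟪gradient f (x + t • v) - gradient f x, v⟫ ≤ β * t * ‖v‖ ^ 2 := by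
        calc ⟪gradient f (x + t • v) - gradient f x, v⟫
            ≤ ‖gradient f (x + t • v) - gradient f x‖ * ‖v‖ := real_inner_le_norm _ _
          _ ≤ (β * ‖(x + t • v) - x‖) * ‖v‖ := by
              apply mul_le_mul_of_nonneg_right (hlip _ _) (norm_nonneg _)
          _ = β * t * ‖v‖ ^ 2 := by
              rw [show (x + t • v) - x = t • v by abel, norm_smul,
                Real.norm_of_nonneg ht.1.le]
              ring
      have := inner_sub_left (𝕜 := ℝ) (gradient f (x + t • v)) (gradient f x) v
      rw [this] at hb
      nlinarith [hb]
  have h01 := hmono (Set.left_mem_Icc.2 zero_le_one) (Set.right_mem_Icc.2 zero_le_one) zero_le_one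
  simp only [hg] at h01
  simp only [zero_smul, add_zero, one_smul, zero_mul, zero_pow, mul_zero, one_mul, one_pow] at h01
  linarith

set_option maxHeartbeats 1000000 in
/-- **Perturbed gradient descent under the PL condition (Proposition 2 of the paper).**
If `f` is differentiable with `β`-Lipschitz gradient, attains its infimum `fstar`,
and satisfies the Polyak–Łojasiewicz condition with parameter `α > 0`, then for any
stepsize `η ∈ (0, 1/(2β))`, setting `σ = 1 − αη(1 − 2ηβ)`, we have `σ < 1` and the
perturbed gradient step `x⁺ = x − η∇f(x) + ε` satisfies
`f(x⁺) − fstar ≤ σ(f(x) − fstar) + (2/η + β)‖ε‖²`. -/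
theorem perturbed_gradient_step_PL {m : ℕ} (f : EuclideanSpace ℝ (Fin m) → ℝ)
    (β α fstar : ℝ) (hβ : 0 < β) (hα : 0 < α)
    (hdiff : Differentiable ℝ f)
    (hlip : ∀ x y : EuclideanSpace ℝ (Fin m),
      ‖gradient f x - gradient f y‖ ≤ β * ‖x - y‖)
    (hmin : ∃ z : EuclideanSpace ℝ (Fin m), f z = fstar ∧ ∀ x, fstar ≤ f x)
    (hPL : ∀ x : EuclideanSpace ℝ (Fin m), 2 * α * (f x - fstar) ≤ ‖gradient f x‖ ^ 2)
    (η : ℝ) (hη0 : 0 < η) (hη1 : η < 1 / (2 * β))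
    (σ : ℝ) (hσ : σ = 1 - α * η * (1 - 2 * η * β)) :
    σ < 1 ∧ ∀ x ε : EuclideanSpace ℝ (Fin m),
      f (x - η • gradient f x + ε) - fstar ≤ σ * (f x - fstar) + (2 / η + β) * ‖ε‖ ^ 2 := by
  have h2ηβ : 2 * η * β < 1 := by
    rw [lt_div_iff₀ (by positivity)] at hη1
    nlinarith
  have hcoef : 0 < 1 - 2 * η * β := by linarith
  constructor
  · rw [hσ]
    have := mul_pos (mul_pos hα hη0) hcoef
    linarith
  intro x ε
  set g := gradient f x with hgdef
  set v : EuclideanSpace ℝ (Fin m) := -(η • g) + ε with hv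
  have hrw : x - η • g + ε = x + v := by rw [hv]; abel
  have hdesc := descent_lemma f β hβ.le hdiff hlip x v
  rw [hrw]
  have hinner : ⟪g, v⟫ = -η * ‖g‖ ^ 2 + ⟪g, ε⟫ := by
    rw [hv, inner_add_right, inner_neg_right, real_inner_smul_right,
      real_inner_self_eq_norm_sq]
    ring
  have hnormv : ‖v‖ ^ 2 ≤ 2 * (η ^ 2 * ‖g‖ ^ 2) + 2 * ‖ε‖ ^ 2 := by
    have h1 : ‖v‖ ≤ η * ‖g‖ + ‖ε‖ := by
      calc ‖v‖ ≤ ‖-(η • g)‖ + ‖ε‖ := norm_add_le _ _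
        _ = η * ‖g‖ + ‖ε‖ := by rw [norm_neg, norm_smul, Real.norm_of_nonneg hη0.le]
    nlinarith [norm_nonneg v, norm_nonneg g, norm_nonneg ε, sq_nonneg (η * ‖g‖ - ‖ε‖)]
  have hyoung : ⟪g, ε⟫ ≤ η / 2 * ‖g‖ ^ 2 + 1 / (2 * η) * ‖ε‖ ^ 2 := by
    have h1 : ⟪g, ε⟫ ≤ ‖g‖ * ‖ε‖ := real_inner_le_norm _ _
    have h3 : ⟪g, ε⟫ * (2 * η) ≤ η ^ 2 * ‖g‖ ^ 2 + ‖ε‖ ^ 2 := by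
      nlinarith [sq_nonneg (η * ‖g‖ - ‖ε‖), mul_le_mul_of_nonneg_left h1
        (by positivity : (0:ℝ) ≤ 2 * η)]
    have h5 : η / 2 * ‖g‖ ^ 2 + 1 / (2 * η) * ‖ε‖ ^ 2
        = (η ^ 2 * ‖g‖ ^ 2 + ‖ε‖ ^ 2) / (2 * η) := by
      field_simp
    rw [h5, le_div_iff₀ (by positivity : (0:ℝ) < 2 * η)]
    exact h3
  have hPLx := hPL x
  have hfs : fstar ≤ f x := (hmin.choose_spec.2) x
  -- combine
  rw [hσ]
  have hkey : f (x + v) ≤ f x - (η / 2) * (1 - 2 * η * β) * ‖g‖ ^ 2 + (1 / (2 * η) + β) * ‖ε‖ ^ 2 := by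
    calc f (x + v) ≤ f x + ⟪g, v⟫ + β / 2 * ‖v‖ ^ 2 := hdesc
      _ ≤ f x + (-η * ‖g‖ ^ 2 + ⟪g, ε⟫) + β / 2 * (2 * (η ^ 2 * ‖g‖ ^ 2) + 2 * ‖ε‖ ^ 2) := by
          rw [hinner]; nlinarith [hnormv]
      _ ≤ f x + (-η * ‖g‖ ^ 2 + (η / 2 * ‖g‖ ^ 2 + 1 / (2 * η) * ‖ε‖ ^ 2))
            + β / 2 * (2 * (η ^ 2 * ‖g‖ ^ 2) + 2 * ‖ε‖ ^ 2) := by linarith [hyoung]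
      _ = f x - (η / 2) * (1 - 2 * η * β) * ‖g‖ ^ 2 + (1 / (2 * η) + β) * ‖ε‖ ^ 2 := by ring
  have hgsq : (η / 2) * (1 - 2 * η * β) * (2 * α * (f x - fstar)) ≤ (η / 2) * (1 - 2 * η * β) * ‖g‖ ^ 2 := by
    apply mul_le_mul_of_nonneg_left hPLx
    positivity
  have hε2 : (1 / (2 * η) + β) * ‖ε‖ ^ 2 ≤ (2 / η + β) * ‖ε‖ ^ 2 := by
    apply mul_le_mul_of_nonneg_right _ (sq_nonneg _)
    have : 1 / (2 * η) ≤ 2 / η := by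
      rw [div_le_div_iff₀ (by positivity) hη0]
      nlinarith
    linarith
  linarith [hkey, hgsq, hε2]
end

section
/- Let p, q : ℕ → ℝ be nonnegative sequences, let j ≥ 1 be an integer and r ∈ [0, 1), and suppose p(t + j) ≤ r·p(t) + Σ_{i=0}^{j−1} q(t + i) for all t ∈ ℕ. Let λ ∈ (0, 1) satisfy λ^j > r. Then for every k ∈ ℕ, p^{λ,k} ≤ (j/(λ^j − r))·q^{λ,k} + c_λ, where c_λ = (λ^j/(λ^j − r))·Σ_{t=0}^{j−1} λ^{−t} p(t). -/
/-- The λ-sequence of a sequence `p`: `p^{λ,k} = max_{0 ≤ t ≤ k} p(t)/λ^t`. -/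
noncomputable def lamSeq (p : ℕ → ℝ) (lam : ℝ) (k : ℕ) : ℝ :=
  (Finset.range (k + 1)).sup' (by simp) (fun t => p t / lam ^ t)

/-- **Proposition 1 of the paper (first part).** If nonnegative sequences `p, q`
satisfy `p(t+j) ≤ r·p(t) + Σ_{i=0}^{j−1} q(t+i)` with `r ∈ [0,1)`, and
`λ ∈ (0,1)` satisfies `λ^j > r`, then for every `k`,
`p^{λ,k} ≤ (j/(λ^j − r))·q^{λ,k} + c_λ`,
where `c_λ = (λ^j/(λ^j − r))·Σ_{t=0}^{j−1} λ^{−t} p(t)`. -/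
theorem lamSeq_bound (p q : ℕ → ℝ) (hp : ∀ k, 0 ≤ p k) (hq : ∀ k, 0 ≤ q k)
    (j : ℕ) (hj : 1 ≤ j) (r : ℝ) (hr0 : 0 ≤ r) (hr1 : r < 1)
    (hrec : ∀ t, p (t + j) ≤ r * p t + ∑ i ∈ Finset.range j, q (t + i))
    (lam : ℝ) (hlam0 : 0 < lam) (hlam1 : lam < 1) (hlamj : r < lam ^ j) :
    ∀ k, lamSeq p lam k
      ≤ (j / (lam ^ j - r)) * lamSeq q lam k
        + (lam ^ j / (lam ^ j - r)) * ∑ t ∈ Finset.range j, p t / lam ^ t := by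
  intro k
  set A := lam ^ j with hA
  have hApos : 0 < A := pow_pos hlam0 j
  have hAr : 0 < A - r := by linarith
  set P := lamSeq p lam k with hPdef
  set Q := lamSeq q lam k with hQdef
  set C := ∑ t ∈ Finset.range j, p t / lam ^ t with hCdef
  have hmem0 : (0 : ℕ) ∈ Finset.range (k + 1) := by simp
  have hQ0 : 0 ≤ Q := by
    have h1 : q 0 / lam ^ 0 ≤ Q := Finset.le_sup' (fun t => q t / lam ^ t) hmem0
    have h0 : 0 ≤ q 0 / lam ^ 0 := div_nonneg (hq 0) (by positivity)
    linarith
  have hP0 : 0 ≤ P := by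
    have h1 : p 0 / lam ^ 0 ≤ P := Finset.le_sup' (fun t => p t / lam ^ t) hmem0
    have h0 : 0 ≤ p 0 / lam ^ 0 := div_nonneg (hp 0) (by positivity)
    linarith
  have hC0 : 0 ≤ C := Finset.sum_nonneg fun t _ => div_nonneg (hp t) (by positivity)
  have hsup : ∀ t ∈ Finset.range (k + 1),
      p t / lam ^ t ≤ (r * P + (j : ℝ) * Q) / A + C := by
    intro t ht
    rw [Finset.mem_range, Nat.lt_succ_iff] at ht
    have hrhs0 : 0 ≤ (r * P + (j : ℝ) * Q) / A :=
      div_nonneg (by positivity) hApos.le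
    rcases lt_or_ge t j with htj | htj
    · have h1 : p t / lam ^ t ≤ C :=
        Finset.single_le_sum (f := fun i => p i / lam ^ i)
          (fun i _ => div_nonneg (hp i) (by positivity)) (Finset.mem_range.mpr htj)
      linarith
    · obtain ⟨s, rfl⟩ : ∃ s, t = s + j := ⟨t - j, (Nat.sub_add_cancel htj).symm⟩
      have hsk : s ≤ k := le_trans (Nat.le_add_right s j) ht
      -- p s ≤ P * lam ^ s
      have hps : p s ≤ P * lam ^ s := by
        have h1 : p s / lam ^ s ≤ P :=
          Finset.le_sup' (fun t => p t / lam ^ t)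
            (Finset.mem_range.mpr (Nat.lt_succ_of_le hsk))
        exact (div_le_iff₀ (pow_pos hlam0 s)).mp h1
      -- sum bound
      have hsum : ∑ i ∈ Finset.range j, q (s + i) ≤ (j : ℝ) * (Q * lam ^ s) := by
        have h1 : ∀ i ∈ Finset.range j, q (s + i) ≤ Q * lam ^ s := by
          intro i hi
          rw [Finset.mem_range] at hi
          have hik : s + i ≤ k := le_trans (by omega) ht
          have h2 : q (s + i) / lam ^ (s + i) ≤ Q :=
            Finset.le_sup' (fun t => q t / lam ^ t)
              (Finset.mem_range.mpr (Nat.lt_succ_of_le hik))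
          have h3 : q (s + i) ≤ Q * lam ^ (s + i) :=
            (div_le_iff₀ (pow_pos hlam0 _)).mp h2
          have h4 : Q * lam ^ (s + i) ≤ Q * lam ^ s := by
            apply mul_le_mul_of_nonneg_left _ hQ0
            exact pow_le_pow_of_le_one hlam0.le hlam1.le (by omega)
          linarith
        calc ∑ i ∈ Finset.range j, q (s + i) ≤ ∑ _i ∈ Finset.range j, Q * lam ^ s :=
              Finset.sum_le_sum h1
          _ = (j : ℝ) * (Q * lam ^ s) := by
              rw [Finset.sum_const, Finset.card_range, nsmul_eq_mul]
      have hrec' := hrec s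
      have hls : (0:ℝ) < lam ^ s := pow_pos hlam0 s
      have hkey : p (s + j) / lam ^ (s + j) ≤ (r * P + (j : ℝ) * Q) / A := by
        rw [div_le_div_iff₀ (pow_pos hlam0 _) hApos]
        have hpow : lam ^ (s + j) = lam ^ s * A := by rw [hA, pow_add]
        rw [hpow]
        have h5 : p (s + j) ≤ r * (P * lam ^ s) + (j : ℝ) * (Q * lam ^ s) := by
          have := mul_le_mul_of_nonneg_left hps hr0
          linarith
        nlinarith [mul_le_mul_of_nonneg_right h5 hApos.le]
      linarith
  have step : P ≤ (r * P + (j : ℝ) * Q) / A + C := Finset.sup'_le _ _ hsup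
  -- final algebra
  have hmul : A * ((r * P + (j : ℝ) * Q) / A + C) = r * P + (j : ℝ) * Q + A * C := by
    field_simp
  have h6 : A * P ≤ r * P + (j : ℝ) * Q + A * C := by
    have h7 := mul_le_mul_of_nonneg_left step hApos.le
    rw [hmul] at h7
    linarith
  rw [div_mul_eq_mul_div, div_mul_eq_mul_div, ← add_div, le_div_iff₀ hAr]
  nlinarith
end

section
/- Let p, q : ℕ → ℝ be nonnegative sequences, let j ≥ 1 be an integer and r ∈ (0, 1), and suppose p(t + j) ≤ r·p(t) + Σ_{i=0}^{j−1} q(t + i) for all t ∈ ℕ. Let λ ∈ (0, 1) satisfy λ^j ≥ 2r/(1 + r). Then for every k ∈ ℕ, p^{λ,k} ≤ (2j/(r(1 − r)))·q^{λ,k} + c_λ, where c_λ = (λ^j/(λ^j − r))·Σ_{t=0}^{j−1} λ^{−t} p(t). -/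
/-!
Write `P = p^{λ,k}`, `Q = q^{λ,k}` and `L = λ^j`. The first `j` terms of the maximum defining `P`
are at most `A = Σ_{t<j} λ^{-t} p(t)`; every later term `p(s+j)/λ^{s+j}` is, by the recursion, at
most `(r P + j Q)/L`. Hence `P ≤ max A ((r P + j Q)/L)`, and since `r < L` the second alternative
solves to `P ≤ j Q/(L - r)`. The condition `L ≥ 2r/(1+r)` gives `L - r ≥ r(1-r)/2`, which turns
this into the constant `2j/(r(1-r))`, while `A ≤ (L/(L-r)) A`.
-/

open Finset

section lamSeq

variable {p : ℕ → ℝ} {lam : ℝ} {k : ℕ}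

theorem le_lamSeq {t : ℕ} (ht : t ≤ k) : p t / lam ^ t ≤ lamSeq p lam k :=
  le_sup' (fun t => p t / lam ^ t) (mem_range.mpr (Nat.lt_succ_of_le ht))

theorem lamSeq_le {M : ℝ} (h : ∀ t ≤ k, p t / lam ^ t ≤ M) : lamSeq p lam k ≤ M :=
  sup'_le _ _ fun t ht => h t (Nat.lt_succ_iff.mp (mem_range.mp ht))

theorem lamSeq_nonneg (hp : 0 ≤ p 0) : 0 ≤ lamSeq p lam k :=
  hp.trans (by simpa using le_lamSeq (p := p) (lam := lam) (Nat.zero_le k))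

theorem sum_range_shift_div_pow_le (hp : ∀ t, 0 ≤ p t) (hlam0 : 0 < lam) (hlam1 : lam ≤ 1)
    {s j : ℕ} (hsj : s + j ≤ k) :
    (∑ i ∈ range j, p (s + i)) / lam ^ (s + j) ≤ j * (lamSeq p lam k / lam ^ j) := by
  rw [sum_div]
  refine (sum_le_card_nsmul _ _ _ fun i hi => ?_).trans_eq (by rw [card_range, nsmul_eq_mul])
  have hij : i < j := mem_range.mp hi
  have hpow : lam ^ (s + i) * lam ^ j ≤ lam ^ (s + j) := by
    rw [← pow_add]
    exact pow_le_pow_of_le_one hlam0.le hlam1 (by omega)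
  calc p (s + i) / lam ^ (s + j)
      ≤ p (s + i) / (lam ^ (s + i) * lam ^ j) :=
        div_le_div_of_nonneg_left (hp _) (by positivity) hpow
    _ = p (s + i) / lam ^ (s + i) / lam ^ j := by rw [div_div]
    _ ≤ lamSeq p lam k / lam ^ j := by gcongr; exact le_lamSeq (by omega)

end lamSeq

theorem lamSeq_le_max_of_recursion {p q : ℕ → ℝ} (hp : ∀ t, 0 ≤ p t) (hq : ∀ t, 0 ≤ q t)
    {j : ℕ} {r : ℝ} (hr0 : 0 ≤ r)
    (hrec : ∀ t, p (t + j) ≤ r * p t + ∑ i ∈ range j, q (t + i))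
    {lam : ℝ} (hlam0 : 0 < lam) (hlam1 : lam ≤ 1) (k : ℕ) :
    lamSeq p lam k ≤ max (∑ t ∈ range j, p t / lam ^ t)
      ((r * lamSeq p lam k + j * lamSeq q lam k) / lam ^ j) := by
  refine lamSeq_le fun t ht => ?_
  rcases lt_or_ge t j with htj | htj
  · exact le_max_of_le_left <|
      single_le_sum (fun i _ => div_nonneg (hp i) (pow_nonneg hlam0.le i)) (mem_range.mpr htj)
  · refine le_max_of_le_right ?_
    obtain ⟨s, rfl⟩ : ∃ s, t = s + j := ⟨t - j, (Nat.sub_add_cancel htj).symm⟩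
    calc p (s + j) / lam ^ (s + j)
        ≤ (r * p s + ∑ i ∈ range j, q (s + i)) / lam ^ (s + j) := by gcongr; exact hrec s
      _ = r * (p s / lam ^ s) / lam ^ j + (∑ i ∈ range j, q (s + i)) / lam ^ (s + j) := by
          rw [add_div, pow_add]; ring
      _ ≤ r * lamSeq p lam k / lam ^ j + j * (lamSeq q lam k / lam ^ j) := by
          gcongr
          · exact le_lamSeq (by omega)
          · exact sum_range_shift_div_pow_le hq hlam0 hlam1 ht
      _ = (r * lamSeq p lam k + j * lamSeq q lam k) / lam ^ j := by ring

theorem le_max_div_sub_of_le_max {P A B r L : ℝ} (hL : 0 < L) (hrL : r < L)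
    (h : P ≤ max A ((r * P + B) / L)) : P ≤ max A (B / (L - r)) := by
  rcases le_max_iff.mp h with hA | hB
  · exact le_max_of_le_left hA
  · refine le_max_of_le_right ?_
    rw [le_div_iff₀ hL] at hB
    rw [le_div_iff₀ (sub_pos.mpr hrL)]
    linarith

theorem mul_one_sub_le_two_mul_sub {r L : ℝ} (hr0 : 0 < r) (hr1 : r < 1)
    (hL : 2 * r / (1 + r) ≤ L) : r * (1 - r) ≤ 2 * (L - r) := by
  rw [div_le_iff₀ (by linarith)] at hL
  -- `2(L - r) - r(1 - r) ≥ r(1 - r)² / (1 + r)`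
  nlinarith [mul_nonneg hr0.le (sq_nonneg (1 - r))]

theorem max_div_sub_le_add {A B r L : ℝ} (hA : 0 ≤ A) (hB : 0 ≤ B) (hr0 : 0 < r) (hr1 : r < 1)
    (hgap : r * (1 - r) ≤ 2 * (L - r)) :
    max A (B / (L - r)) ≤ 2 / (r * (1 - r)) * B + L / (L - r) * A := by
  have hr : 0 < r * (1 - r) := mul_pos hr0 (sub_pos.mpr hr1)
  have hLr : 0 < L - r := by linarith
  have hB' : 0 ≤ 2 / (r * (1 - r)) * B := mul_nonneg (div_nonneg zero_le_two hr.le) hB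
  have hA' : A ≤ L / (L - r) * A :=
    le_mul_of_one_le_left hA ((one_le_div hLr).mpr (by linarith))
  have hBr : B / (L - r) ≤ 2 / (r * (1 - r)) * B := by
    rw [div_eq_inv_mul]
    refine mul_le_mul_of_nonneg_right ?_ hB
    rw [inv_eq_one_div, div_le_div_iff₀ hLr hr]
    linarith
  have hA0 : 0 ≤ L / (L - r) * A := hA.trans hA'
  exact max_le (by linarith) (by linarith)

theorem lamSeq_bound'_general (p q : ℕ → ℝ) (hp : ∀ k, 0 ≤ p k) (hq : ∀ k, 0 ≤ q k)
    (j : ℕ) (r : ℝ) (hr0 : 0 < r) (hr1 : r < 1)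
    (hrec : ∀ t, p (t + j) ≤ r * p t + ∑ i ∈ Finset.range j, q (t + i))
    (lam : ℝ) (hlam0 : 0 < lam) (hlam1 : lam < 1)
    (hlamj : 2 * r / (1 + r) ≤ lam ^ j) :
    ∀ k, lamSeq p lam k
      ≤ (2 * j / (r * (1 - r))) * lamSeq q lam k
        + (lam ^ j / (lam ^ j - r)) * ∑ t ∈ Finset.range j, p t / lam ^ t := by
  intro k
  have hgap := mul_one_sub_le_two_mul_sub hr0 hr1 hlamj
  have hrL : r < lam ^ j := by nlinarith [mul_pos hr0 (sub_pos.mpr hr1)]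
  have hA : 0 ≤ ∑ t ∈ range j, p t / lam ^ t :=
    sum_nonneg fun t _ => div_nonneg (hp t) (pow_nonneg hlam0.le t)
  have hQ : 0 ≤ (j : ℝ) * lamSeq q lam k := mul_nonneg j.cast_nonneg (lamSeq_nonneg (hq 0))
  calc lamSeq p lam k
      ≤ max (∑ t ∈ range j, p t / lam ^ t) (j * lamSeq q lam k / (lam ^ j - r)) :=
        le_max_div_sub_of_le_max (pow_pos hlam0 j) hrL
          (lamSeq_le_max_of_recursion hp hq hr0.le hrec hlam0 hlam1.le k)
    _ ≤ 2 / (r * (1 - r)) * (j * lamSeq q lam k)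
          + lam ^ j / (lam ^ j - r) * ∑ t ∈ range j, p t / lam ^ t :=
        max_div_sub_le_add hA hQ hr0 hr1 hgap
    _ = _ := by ring

/-- **Proposition 1 of the paper (second part).** If nonnegative sequences `p, q`
satisfy `p(t+j) ≤ r·p(t) + Σ_{i=0}^{j−1} q(t+i)` with `r ∈ (0,1)`, and
`λ ∈ (0,1)` satisfies `λ^j ≥ 2r/(1+r)`, then for every `k`,
`p^{λ,k} ≤ (2j/(r(1−r)))·q^{λ,k} + c_λ`,
where `c_λ = (λ^j/(λ^j − r))·Σ_{t=0}^{j−1} λ^{−t} p(t)`. -/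
theorem lamSeq_bound' (p q : ℕ → ℝ) (hp : ∀ k, 0 ≤ p k) (hq : ∀ k, 0 ≤ q k)
    (j : ℕ) (hj : 1 ≤ j) (r : ℝ) (hr0 : 0 < r) (hr1 : r < 1)
    (hrec : ∀ t, p (t + j) ≤ r * p t + ∑ i ∈ Finset.range j, q (t + i))
    (lam : ℝ) (hlam0 : 0 < lam) (hlam1 : lam < 1)
    (hlamj : 2 * r / (1 + r) ≤ lam ^ j) :
    ∀ k, lamSeq p lam k
      ≤ (2 * j / (r * (1 - r))) * lamSeq q lam k
        + (lam ^ j / (lam ^ j - r)) * ∑ t ∈ Finset.range j, p t / lam ^ t :=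
  lamSeq_bound'_general p q hp hq j r hr0 hr1 hrec lam hlam0 hlam1 hlamj
end

section
/- Consider n ≥ 1 asynchronous nodes with activation-time sequences s_i : ℕ → ℝ (i = 1,…,n) that are strictly increasing with τ̲ ≤ s_i(m+1) − s_i(m) ≤ τ̄ for all m, where 0 < τ̲ ≤ τ̄ < ∞, and assume all activation times are pairwise distinct (s_i(m) = s_j(l) implies i = j and m = l). Let t : ℕ → ℝ be the strictly increasing enumeration of the union of all activation times (t is strictly increasing and its range equals ∪_i range(s_i)). Set b₁ = (n − 1)·⌈τ̄/τ̲⌉ + 1. Then for every k ∈ ℕ and every node i whose first activation satisfies s_i(0) ≤ t(k), there exists m ∈ ℕ with t(k) < s_i(m) ≤ t(k + b₁); that is, each node is activated at least once within the time interval (t(k), t(k + b₁)]. -/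
/-!
If node `i` had no activation in the window `(t k, t (k + b₁)]`, the window would be shorter
than `τb ≤ ⌈τb / τl⌉₊ * τl`: node `i` is activated at or before `t k`, eventually after it, and
never waits more than `τb` between activations. Activations of one node are `τl` apart, so each
of the other `n - 1` nodes is activated at most `⌈τb / τl⌉₊` times in the window; but the window
contains the `b₁ = (n - 1) * ⌈τb / τl⌉₊ + 1` activation times `t (k + 1), …, t (k + b₁)`.
-/

open Finset

section GapSequence

variable {f : ℕ → ℝ} {τ : ℝ}

theorem add_mul_le_of_forall_le_sub (hgap : ∀ m, τ ≤ f (m + 1) - f m) (a d : ℕ) :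
    f a + d * τ ≤ f (a + d) := by
  induction d with
  | zero => simp
  | succ d ih =>
    rw [← add_assoc]
    push_cast
    linarith [hgap (a + d)]

theorem exists_gt_of_forall_le_sub (hτ : 0 < τ) (hgap : ∀ m, τ ≤ f (m + 1) - f m) (x : ℝ) :
    ∃ m, x < f m := by
  obtain ⟨d, hd⟩ := exists_nat_gt ((x - f 0) / τ)
  refine ⟨d, ?_⟩
  have hgrow := add_mul_le_of_forall_le_sub hgap 0 d
  rw [zero_add] at hgrow
  linarith [(div_lt_iff₀ hτ).1 hd]

theorem card_le_of_forall_mem_Ioc (hτ : 0 ≤ τ) (hgap : ∀ m, τ ≤ f (m + 1) - f m)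
    {x y : ℝ} {C : ℕ} (hxy : y - x ≤ C * τ) {T : Finset ℕ} (hT : ∀ m ∈ T, f m ∈ Set.Ioc x y) :
    #T ≤ C := by
  by_contra! hC
  have hne : T.Nonempty := card_pos.1 (by omega)
  set a := T.min' hne
  set b := T.max' hne
  have hab : C ≤ b - a := by
    have := card_le_card (t := Icc a b) fun m hm => mem_Icc.2 ⟨T.min'_le m hm, T.le_max' m hm⟩
    rw [Nat.card_Icc] at this
    omega
  have hgrow := add_mul_le_of_forall_le_sub hgap a (b - a)
  rw [Nat.add_sub_cancel' (T.min'_le b (T.max'_mem hne))] at hgrow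
  have hCab : (C : ℝ) * τ ≤ (b - a : ℕ) * τ := by gcongr
  have ha := hT a (T.min'_mem hne)
  have hb := hT b (T.max'_mem hne)
  linarith [ha.1, hb.2]

theorem sub_lt_of_forall_lt_imp_lt {δ x y : ℝ} (hgap : ∀ m, f (m + 1) - f m ≤ δ) (h0 : f 0 ≤ x)
    (hunbdd : ∃ m, x < f m) (hnone : ∀ m, x < f m → y < f m) : y - x < δ := by
  by_contra! hxy
  have hle : ∀ m, f m ≤ x := by
    intro m
    induction m with
    | zero => exact h0
    | succ m ih =>
      by_contra! hx
      linarith [hnone _ hx, hgap m]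
  obtain ⟨m, hm⟩ := hunbdd
  exact (hm.trans_le (hle m)).false

end GapSequence

theorem card_le_mul_card_of_forall_card_le {ι α β κ : Type*} {s : ι → α → β} {t : κ → β}
    (ht : Function.Injective t) {Q : Finset κ} {N : Finset ι} {C : ℕ}
    (hcover : ∀ q ∈ Q, ∃ j ∈ N, ∃ m, s j m = t q)
    (hC : ∀ j ∈ N, ∀ T : Finset α, (∀ m ∈ T, s j m ∈ t '' Q) → #T ≤ C) :
    #Q ≤ C * #N := by
  classical
  rcases Q.eq_empty_or_nonempty with rfl | ⟨q₀, hq₀⟩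
  · simp
  obtain ⟨j₀, -, m₀, -⟩ := hcover q₀ hq₀
  have : Nonempty ι := ⟨j₀⟩
  have : Nonempty α := ⟨m₀⟩
  choose! J hJ M hM using hcover
  refine card_le_mul_card_image_of_maps_to hJ C fun j hj => ?_
  have hfiber : ∀ q ∈ {q ∈ Q | J q = j}, s j (M q) = t q := by
    intro q hq
    obtain ⟨hqQ, rfl⟩ := mem_filter.1 hq
    exact hM q hqQ
  rw [← card_image_of_injOn (f := M) fun q hq q' hq' hqq' => ht ?_]
  · refine hC j hj _ fun m hm => ?_
    obtain ⟨q, hq, rfl⟩ := mem_image.1 hm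
    exact ⟨q, (mem_filter.1 hq).1, (hfiber q hq).symm⟩
  · rw [← hfiber q hq, ← hfiber q' hq', hqq']

theorem node_activated_within_b1_general (n : ℕ) (s : Fin n → ℕ → ℝ)
    (τl τb : ℝ) (hτl : 0 < τl)
    (hgap : ∀ i m, τl ≤ s i (m + 1) - s i m ∧ s i (m + 1) - s i m ≤ τb)
    (t : ℕ → ℝ) (ht : StrictMono t)
    (hrange : Set.range t = ⋃ i, Set.range (s i)) :
    ∀ (k : ℕ) (i : Fin n), s i 0 ≤ t k →
      ∃ m : ℕ, t k < s i m ∧ s i m ≤ t (k + ((n - 1) * ⌈τb / τl⌉₊ + 1)) := by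
  intro k i hik
  set C := ⌈τb / τl⌉₊
  set b₁ := (n - 1) * C + 1
  have hCτ : τb ≤ C * τl := (div_le_iff₀ hτl).1 (Nat.le_ceil _)
  by_contra! hnone
  have hshort : t (k + b₁) - t k < τb := sub_lt_of_forall_lt_imp_lt (fun m => (hgap i m).2) hik
    (exists_gt_of_forall_le_sub hτl (fun m => (hgap i m).1) _) hnone
  have hcount : #(Ioc k (k + b₁)) ≤ C * #(univ.erase i) := by
    refine card_le_mul_card_of_forall_card_le (s := s) ht.injective (fun q hq => ?_) fun j _ T hT => ?_
    · obtain ⟨j, m, hjm⟩ := Set.mem_iUnion.1 (hrange ▸ Set.mem_range_self q :)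
      obtain ⟨hkq, hqb⟩ := mem_Ioc.1 hq
      refine ⟨j, mem_erase.2 ⟨?_, mem_univ j⟩, m, hjm⟩
      rintro rfl
      exact (ht.monotone hqb).not_gt (hjm ▸ hnone m (hjm ▸ ht hkq))
    · refine card_le_of_forall_mem_Ioc hτl.le (fun m => (hgap j m).1) (hshort.le.trans hCτ)
        fun m hm => ?_
      obtain ⟨q, hq, hqm⟩ := hT m hm
      obtain ⟨hkq, hqb⟩ := mem_Ioc.1 hq
      exact hqm ▸ ⟨ht hkq, ht.monotone hqb⟩
  rw [Nat.card_Ioc, card_erase_of_mem (mem_univ i), card_univ, Fintype.card_fin,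
    mul_comm C] at hcount
  omega

/-- **Lemma 1(a) of the paper.** Consider `n ≥ 1` asynchronous nodes with strictly
increasing activation-time sequences `s i` whose consecutive gaps lie in `[τl, τb]`
(`0 < τl ≤ τb`), all activation times pairwise distinct, and let `t` be the strictly
increasing enumeration of the union of all activation times. With
`b₁ = (n − 1)·⌈τb/τl⌉ + 1`, every node `i` whose first activation is not after `t k`
is activated at least once within the time interval `(t k, t (k + b₁)]`. -/
theorem node_activated_within_b1 (n : ℕ) (hn : 1 ≤ n) (s : Fin n → ℕ → ℝ)
    (τl τb : ℝ) (hτl : 0 < τl) (hττ : τl ≤ τb)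
    (hmono : ∀ i, StrictMono (s i))
    (hgap : ∀ i m, τl ≤ s i (m + 1) - s i m ∧ s i (m + 1) - s i m ≤ τb)
    (hdist : ∀ i m j l, s i m = s j l → i = j ∧ m = l)
    (t : ℕ → ℝ) (ht : StrictMono t)
    (hrange : Set.range t = ⋃ i, Set.range (s i)) :
    ∀ (k : ℕ) (i : Fin n), s i 0 ≤ t k →
      ∃ m : ℕ, t k < s i m ∧ s i m ≤ t (k + ((n - 1) * ⌈τb / τl⌉₊ + 1)) :=
  node_activated_within_b1_general n s τl τb hτl hgap t ht hrange
end

section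
/- Consider n ≥ 1 asynchronous nodes with activation-time sequences s_i : ℕ → ℝ (i = 1,…,n) that are strictly increasing with s_i(m+1) − s_i(m) ≥ τ̲ for all m, where τ̲ > 0, and assume all activation times are pairwise distinct. Let t : ℕ → ℝ be the strictly increasing enumeration of the union of all activation times. Then for all p ≤ q in ℕ, q − p + 1 ≤ n·(⌊(t(q) − t(p))/τ̲⌋ + 1). In particular, if a message sent at time t(p) is received within delay at most τ > 0 (i.e., by time t(p) + τ), then fewer than n·(⌊τ/τ̲⌋ + 1) global activation events can occur in the merged sequence between the sending time and the reception time. -/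
/-!
Attribute each merged event to the node that fires it. The events of one node inside a window
`[t p, t q]` are consecutive activations of that node, and consecutive activations are at least
`τl` apart, so there are at most `⌊(t q - t p) / τl⌋ + 1` of them; summing over the `n` nodes
bounds the `q - p + 1` events of the window.
-/

open Finset

theorem Finset.card_le_add_one_of_forall_sub_le {S : Finset ℕ} {K : ℕ}
    (h : ∀ a ∈ S, ∀ b ∈ S, b - a ≤ K) : #S ≤ K + 1 := by
  rcases S.eq_empty_or_nonempty with rfl | hS
  · simp
  have hsub : S ⊆ Icc (S.min' hS) (S.min' hS + K) := fun b hb =>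
    mem_Icc.mpr ⟨S.min'_le b hb, by have := h _ (S.min'_mem hS) b hb; omega⟩
  simpa [add_assoc] using card_le_card hsub

section Gaps

variable {α : Type*} {f : ℕ → α} {c : α}

theorem nsmul_le_sub_of_le_sub_succ [AddCommGroup α] [PartialOrder α] [IsOrderedAddMonoid α]
    (hgap : ∀ m, c ≤ f (m + 1) - f m) {a b : ℕ} (hab : a ≤ b) :
    (b - a) • c ≤ f b - f a := by
  induction b, hab using Nat.le_induction with
  | base => simp
  | succ b hab ih =>
    calc (b + 1 - a) • c = (b - a) • c + c := by rw [Nat.sub_add_comm hab, succ_nsmul]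
      _ ≤ (f b - f a) + (f (b + 1) - f b) := add_le_add ih (hgap b)
      _ = f (b + 1) - f a := by abel

variable [Field α] [LinearOrder α] [IsStrictOrderedRing α] [FloorSemiring α]

theorem sub_le_floor_of_le_sub_succ (hc : 0 < c) (hgap : ∀ m, c ≤ f (m + 1) - f m)
    {x y : α} {a b : ℕ} (ha : x ≤ f a) (hb : f b ≤ y) : b - a ≤ ⌊(y - x) / c⌋₊ := by
  rcases le_total a b with hab | hba
  · refine Nat.le_floor ?_
    rw [le_div_iff₀ hc, ← nsmul_eq_mul]
    linarith [nsmul_le_sub_of_le_sub_succ hgap hab]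
  · simp [Nat.sub_eq_zero_of_le hba]

theorem card_le_floor_add_one_of_le_sub_succ (hc : 0 < c) (hgap : ∀ m, c ≤ f (m + 1) - f m)
    {x y : α} {S : Finset ℕ} (hS : ∀ m ∈ S, f m ∈ Set.Icc x y) :
    #S ≤ ⌊(y - x) / c⌋₊ + 1 :=
  card_le_add_one_of_forall_sub_le fun a ha b hb =>
    sub_le_floor_of_le_sub_succ hc hgap (hS a ha).1 (hS b hb).2

end Gaps

theorem card_Icc_le_of_mem_range_merge {ι α : Type*} [Fintype ι] [DecidableEq ι] [Field α] [LinearOrder α]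
    [IsStrictOrderedRing α] [FloorSemiring α] {s : ι → ℕ → α} {c : α} (hc : 0 < c)
    (hgap : ∀ i m, c ≤ s i (m + 1) - s i m) {t : ℕ → α} (ht : StrictMono t)
    (hmerge : ∀ k, ∃ i m, s i m = t k) (p q : ℕ) :
    #(Icc p q) ≤ Fintype.card ι * (⌊(t q - t p) / c⌋₊ + 1) := by
  choose node idx hidx using hmerge
  rw [← card_univ, mul_comm]
  refine card_le_mul_card_image_of_maps_to (f := node) (fun _ _ => mem_univ _) _ fun i _ => ?_
  set F := {k ∈ Icc p q | node k = i}
  have hidx_F : ∀ k ∈ F, s i (idx k) = t k := fun k hk => by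
    rw [← (mem_filter.mp hk).2]; exact hidx k
  have hinj : Set.InjOn idx F := fun k hk l hl hkl =>
    ht.injective (by rw [← hidx_F k hk, ← hidx_F l hl, hkl])
  rw [← card_image_of_injOn hinj]
  refine card_le_floor_add_one_of_le_sub_succ hc (hgap i) fun m hm => ?_
  obtain ⟨k, hk, rfl⟩ := mem_image.mp hm
  have hkpq := mem_Icc.mp (mem_filter.mp hk).1
  rw [hidx_F k hk]
  exact ⟨ht.monotone hkpq.1, ht.monotone hkpq.2⟩

theorem merged_event_counting_general (n : ℕ) (s : Fin n → ℕ → ℝ)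
    (τl : ℝ) (hτl : 0 < τl)
    (hgap : ∀ i m, τl ≤ s i (m + 1) - s i m)
    (t : ℕ → ℝ) (ht : StrictMono t)
    (hrange : Set.range t = ⋃ i, Set.range (s i))
    (τ : ℝ) :
    (∀ p q : ℕ, p ≤ q → q - p + 1 ≤ n * (⌊(t q - t p) / τl⌋₊ + 1)) ∧
    (∀ p q : ℕ, p ≤ q → t q ≤ t p + τ → q - p < n * (⌊τ / τl⌋₊ + 1)) := by
  have hmerge : ∀ k, ∃ i m, s i m = t k := fun k => by
    simpa [hrange, eq_comm] using Set.mem_range_self (f := t) k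
  have hwindow : ∀ p q : ℕ, p ≤ q → q - p + 1 ≤ n * (⌊(t q - t p) / τl⌋₊ + 1) := by
    intro p q hpq
    have := card_Icc_le_of_mem_range_merge hτl hgap ht hmerge p q
    rw [Nat.card_Icc, Fintype.card_fin] at this
    omega
  refine ⟨hwindow, fun p q hpq hdelay => ?_⟩
  have hfloor : ⌊(t q - t p) / τl⌋₊ ≤ ⌊τ / τl⌋₊ :=
    Nat.floor_le_floor (div_le_div_of_nonneg_right (by linarith) hτl.le)
  have := hwindow p q hpq
  have := Nat.mul_le_mul_left n (Nat.add_le_add_right hfloor 1)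
  omega

/-- **Counting estimate underlying Lemma 1(b) of the paper.** Consider `n ≥ 1`
asynchronous nodes with strictly increasing activation-time sequences `s i` whose
consecutive gaps are at least `τl > 0`, all activation times pairwise distinct,
and let `t` be the strictly increasing enumeration of the union of all activation
times. Then for all `p ≤ q`, `q − p + 1 ≤ n·(⌊(t q − t p)/τl⌋ + 1)`. In particular,
if a message sent at time `t p` is received by time `t p + τ` (with `τ > 0`), then
fewer than `n·(⌊τ/τl⌋ + 1)` global activation events occur in the merged sequence
between the sending time and the reception time. -/
theorem merged_event_counting (n : ℕ) (hn : 1 ≤ n) (s : Fin n → ℕ → ℝ)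
    (τl : ℝ) (hτl : 0 < τl)
    (hmono : ∀ i, StrictMono (s i))
    (hgap : ∀ i m, τl ≤ s i (m + 1) - s i m)
    (hdist : ∀ i m j l, s i m = s j l → i = j ∧ m = l)
    (t : ℕ → ℝ) (ht : StrictMono t)
    (hrange : Set.range t = ⋃ i, Set.range (s i))
    (τ : ℝ) (hτ : 0 < τ) :
    (∀ p q : ℕ, p ≤ q → q - p + 1 ≤ n * (⌊(t q - t p) / τl⌋₊ + 1)) ∧
    (∀ p q : ℕ, p ≤ q → t q ≤ t p + τ → q - p < n * (⌊τ / τl⌋₊ + 1)) :=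
  merged_event_counting_general n s τl hτl hgap t ht hrange τ
end

section
/- Let {A(k)}_{k∈ℕ} be a sequence of n×n row-stochastic real matrices, let B ≥ 1 be an integer and θ ∈ (0, 1], and suppose that for every k ∈ ℕ every entry of the product Φ_B(k) = A(k+B−1)A(k+B−2)···A(k) is at least θ. Then for every k and t there exists a stochastic vector φ_t(k) ∈ ℝ^n such that |[Φ_t(k)]_{ij} − [φ_t(k)]_j| ≤ 2(1 − θ)^{⌊t/B⌋} for all i, j; that is, the backward products Φ_t(k) approach a rank-one matrix 1·φ_t(k)ᵀ at a geometric rate in t. -/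
/-!
Left multiplication by a row-stochastic matrix `P` with all entries at least `θ` shrinks the
spread `max_{i,i'} (M i j - M i' j)` of each column of `M` by the factor `1 - θ`: every row of
`P * M` averages the column with weight at least `θ` on its minimum. Writing
`t = B ⌊t/B⌋ + t % B`, the product `Φ_t(k)` is `⌊t/B⌋` such blocks times a stochastic matrix, so
its columns have spread at most `(1 - θ)^⌊t/B⌋`, and any row of `Φ_t(k)` serves as `φ_t(k)`.
-/

/-- Backward product of a sequence of matrices:
`backProd A t k = A(k+t−1)·A(k+t−2)···A(k)`, with `backProd A 0 k = I`. -/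
def backProd {n : ℕ} (A : ℕ → Matrix (Fin n) (Fin n) ℝ) : ℕ → ℕ → Matrix (Fin n) (Fin n) ℝ
  | 0, _ => 1
  | t + 1, k => A (k + t) * backProd A t k

open Matrix

section Contraction

variable {R ι κ : Type*} [CommRing R] [LinearOrder R] [IsStrictOrderedRing R]
  [Fintype ι] [DecidableEq ι] {P : Matrix ι ι R} {θ c : R}

theorem mulVec_apply_sub_mulVec_apply_le (hP : P ∈ rowStochastic R ι) (hθ : ∀ i j, θ ≤ P i j)
    {v : ι → R} (hv : ∀ l l', v l - v l' ≤ c) (i i' : ι) :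
    (P *ᵥ v) i - (P *ᵥ v) i' ≤ (1 - θ) * c := by
  have : Nonempty ι := ⟨i⟩
  obtain ⟨l₀, hl₀⟩ := Finite.exists_min v
  have hc : 0 ≤ c := by simpa using hv l₀ l₀
  have upper : (P *ᵥ v) i ≤ v l₀ + (1 - P i l₀) * c := by
    have hrest : ∑ l ∈ Finset.univ.erase l₀, P i l * v l
        ≤ ∑ l ∈ Finset.univ.erase l₀, P i l * (v l₀ + c) :=
      Finset.sum_le_sum fun l _ ↦
        mul_le_mul_of_nonneg_left (by linarith [hv l l₀]) (nonneg_of_mem_rowStochastic hP)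
    rw [Finset.sum_erase_eq_sub (Finset.mem_univ _), Finset.sum_erase_eq_sub (Finset.mem_univ _),
      ← Finset.sum_mul, sum_row_of_mem_rowStochastic hP] at hrest
    change ∑ l, P i l * v l ≤ _
    linarith
  have lower : v l₀ ≤ (P *ᵥ v) i' :=
    calc v l₀ = ∑ l, P i' l * v l₀ := by
          rw [← Finset.sum_mul, sum_row_of_mem_rowStochastic hP, one_mul]
      _ ≤ ∑ l, P i' l * v l := Finset.sum_le_sum fun l _ ↦
          mul_le_mul_of_nonneg_left (hl₀ l) (nonneg_of_mem_rowStochastic hP)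
  have hweight : (1 - P i l₀) * c ≤ (1 - θ) * c :=
    mul_le_mul_of_nonneg_right (sub_le_sub_left (hθ i l₀) 1) hc
  linarith

theorem mul_apply_sub_mul_apply_le (hP : P ∈ rowStochastic R ι) (hθ : ∀ i j, θ ≤ P i j)
    {M : Matrix ι κ R} {j : κ} (hM : ∀ l l', M l j - M l' j ≤ c) (i i' : ι) :
    (P * M) i j - (P * M) i' j ≤ (1 - θ) * c :=
  mulVec_apply_sub_mulVec_apply_le hP hθ hM i i'

end Contraction

section BackProd

variable {n : ℕ} {A : ℕ → Matrix (Fin n) (Fin n) ℝ}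

theorem backProd_mem_rowStochastic (hA : ∀ k, A k ∈ rowStochastic ℝ (Fin n)) (t k : ℕ) :
    backProd A t k ∈ rowStochastic ℝ (Fin n) := by
  induction t with
  | zero => exact Submonoid.one_mem _
  | succ t ih => exact Submonoid.mul_mem _ (hA _) ih

theorem backProd_add (s u k : ℕ) :
    backProd A (s + u) k = backProd A s (k + u) * backProd A u k := by
  induction s with
  | zero => simp [backProd]
  | succ s ih =>
    rw [show s + 1 + u = s + u + 1 by omega, backProd, ih, backProd, Matrix.mul_assoc,
      show k + (s + u) = k + u + s by omega]

theorem backProd_apply_sub_apply_le_pow (hA : ∀ k, A k ∈ rowStochastic ℝ (Fin n)) {B : ℕ}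
    {θ : ℝ} (hθ : ∀ k i j, θ ≤ backProd A B k i j) (q r k : ℕ) (i i' j : Fin n) :
    backProd A (B * q + r) k i j - backProd A (B * q + r) k i' j ≤ (1 - θ) ^ q := by
  induction q generalizing i i' with
  | zero =>
    have hP := backProd_mem_rowStochastic hA r k
    simp only [mul_zero, zero_add, pow_zero]
    linarith [le_one_of_mem_rowStochastic hP (i := i) (j := j),
      nonneg_of_mem_rowStochastic hP (i := i') (j := j)]
  | succ q ih =>
    rw [show B * (q + 1) + r = B + (B * q + r) by ring, backProd_add, pow_succ']
    exact mul_apply_sub_mul_apply_le (backProd_mem_rowStochastic hA B _) (hθ _) ih i i'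

end BackProd

theorem row_stochastic_backProd_ergodic_general (n : ℕ) (hn : 0 < n)
    (A : ℕ → Matrix (Fin n) (Fin n) ℝ)
    (hnonneg : ∀ k i j, 0 ≤ A k i j)
    (hrow : ∀ k i, ∑ j, A k i j = 1)
    (B : ℕ) (θ : ℝ)
    (hpos : ∀ k i j, θ ≤ backProd A B k i j) :
    ∀ k t, ∃ φ : Fin n → ℝ, (∀ i, 0 ≤ φ i) ∧ (∑ i, φ i = 1) ∧
      ∀ i j, |backProd A t k i j - φ j| ≤ 2 * (1 - θ) ^ (t / B) := by
  intro k t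
  have hA : ∀ k, A k ∈ rowStochastic ℝ (Fin n) :=
    fun k ↦ mem_rowStochastic_iff_sum.2 ⟨hnonneg k, hrow k⟩
  have hΦ := backProd_mem_rowStochastic hA t k
  let i₀ : Fin n := ⟨0, hn⟩
  refine ⟨backProd A t k i₀, fun j ↦ nonneg_of_mem_rowStochastic hΦ,
    sum_row_of_mem_rowStochastic hΦ i₀, fun i j ↦ ?_⟩
  have hspread := backProd_apply_sub_apply_le_pow hA hpos (t / B) (t % B) k
  rw [Nat.div_add_mod] at hspread
  have hdist : |backProd A t k i j - backProd A t k i₀ j| ≤ (1 - θ) ^ (t / B) :=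
    abs_sub_le_iff.2 ⟨hspread i i₀ j, hspread i₀ i j⟩
  linarith [(abs_nonneg _).trans hdist]

/-- **Lemma 2(a) of the paper (row-stochastic version).** Let `{A(k)}` be row-stochastic
matrices such that every entry of every length-`B` backward product `Φ_B(k)` is at least
`θ ∈ (0,1]`. Then for all `k, t` there is a stochastic vector `φ_t(k)` with
`|[Φ_t(k)]_{ij} − [φ_t(k)]_j| ≤ 2(1 − θ)^{⌊t/B⌋}`; i.e. `Φ_t(k)` approaches the rank-one
matrix `1·φ_t(k)ᵀ` geometrically in `t`. -/
theorem row_stochastic_backProd_ergodic (n : ℕ) (hn : 0 < n)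
    (A : ℕ → Matrix (Fin n) (Fin n) ℝ)
    (hnonneg : ∀ k i j, 0 ≤ A k i j)
    (hrow : ∀ k i, ∑ j, A k i j = 1)
    (B : ℕ) (hB : 1 ≤ B) (θ : ℝ) (hθ0 : 0 < θ) (hθ1 : θ ≤ 1)
    (hpos : ∀ k i j, θ ≤ backProd A B k i j) :
    ∀ k t, ∃ φ : Fin n → ℝ, (∀ i, 0 ≤ φ i) ∧ (∑ i, φ i = 1) ∧
      ∀ i j, |backProd A t k i j - φ j| ≤ 2 * (1 - θ) ^ (t / B) :=
  row_stochastic_backProd_ergodic_general n hn A hnonneg hrow B θ hpos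
end

section
/- For every sequence {A(k)}_{k∈ℕ} of n×n row-stochastic real matrices there exists a sequence of stochastic vectors {π(k)}_{k∈ℕ} in ℝ^n such that π(k+1)ᵀ A(k) = π(k)ᵀ for all k ∈ ℕ (an absolute probability sequence of {A(k)}). -/
/-!
Pull a fixed stochastic vector back from time `m` through `A(m-1), …, A(0)`: this gives a
sequence of stochastic vectors satisfying `π(k+1)ᵀ A(k) = π(k)ᵀ` for all `k < m`. In the product
of countably many copies of the (compact) standard simplex these finite-horizon solution sets are
closed, nonempty and decreasing in `m`, so by Cantor's intersection theorem they have a common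
point, which is an absolute probability sequence.
-/

open Set Matrix

section Algebra

variable {R ι : Type*} [Fintype ι] [Semiring R] [PartialOrder R]

theorem Matrix.vecMul_mem_stdSimplex [IsOrderedRing R] [DecidableEq ι] {M : Matrix ι ι R}
    (hM : M ∈ rowStochastic R ι) {x : ι → R} (hx : x ∈ stdSimplex R ι) :
    x ᵥ* M ∈ stdSimplex R ι := by
  refine ⟨nonneg_vecMul_of_mem_rowStochastic hM hx.1, ?_⟩
  have hx1 : x ⬝ᵥ 1 = 1 := by simpa [dotProduct_one] using hx.2
  simpa [dotProduct_one] using vecMul_dotProduct_one_eq_one_rowStochastic hM hx1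

/-- `backwardIterate A v j k = vᵀ A(k+j-1) ⋯ A(k)`: the vector `v`, placed at time `k + j`,
pulled back to time `k`. -/
def backwardIterate (A : ℕ → Matrix ι ι R) (v : ι → R) : ℕ → ℕ → ι → R
  | 0, _ => v
  | j + 1, k => backwardIterate A v j (k + 1) ᵥ* A k

theorem backwardIterate_mem_stdSimplex [IsOrderedRing R] [DecidableEq ι]
    {A : ℕ → Matrix ι ι R} (hA : ∀ k, A k ∈ rowStochastic R ι) {v : ι → R}
    (hv : v ∈ stdSimplex R ι) (j k : ℕ) :
    backwardIterate A v j k ∈ stdSimplex R ι := by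
  induction j generalizing k with
  | zero => exact hv
  | succ j ih => exact vecMul_mem_stdSimplex (hA k) (ih (k + 1))

def absProbSeqUpTo (A : ℕ → Matrix ι ι R) (m : ℕ) : Set (ℕ → ι → R) :=
  (univ.pi fun _ => stdSimplex R ι) ∩ {π | ∀ k < m, π (k + 1) ᵥ* A k = π k}

theorem absProbSeqUpTo_succ_subset (A : ℕ → Matrix ι ι R) (m : ℕ) :
    absProbSeqUpTo A (m + 1) ⊆ absProbSeqUpTo A m :=
  fun _ hπ => ⟨hπ.1, fun k hk => hπ.2 k (Nat.lt_succ_of_lt hk)⟩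

theorem backwardIterate_mem_absProbSeqUpTo [IsOrderedRing R] [DecidableEq ι]
    {A : ℕ → Matrix ι ι R} (hA : ∀ k, A k ∈ rowStochastic R ι) {v : ι → R}
    (hv : v ∈ stdSimplex R ι) (m : ℕ) :
    (fun k => backwardIterate A v (m - k) k) ∈ absProbSeqUpTo A m := by
  refine ⟨fun k _ => backwardIterate_mem_stdSimplex hA hv _ k, fun k hk => ?_⟩
  obtain ⟨j, hj⟩ : ∃ j, m - k = j + 1 := ⟨m - (k + 1), by omega⟩
  change backwardIterate A v (m - (k + 1)) (k + 1) ᵥ* A k = backwardIterate A v (m - k) k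
  rw [hj, show m - (k + 1) = j by omega, backwardIterate]

end Algebra

section Topology

variable {ι : Type*} [Fintype ι]

theorem isClosed_absProbSeqUpTo (A : ℕ → Matrix ι ι ℝ) (m : ℕ) :
    IsClosed (absProbSeqUpTo A m) := by
  refine (isClosed_set_pi fun _ _ => isClosed_stdSimplex ℝ ι).inter ?_
  simp only [ofPred_forall]
  exact isClosed_iInter fun k => isClosed_iInter fun _ =>
    isClosed_eq ((continuous_apply _).matrix_vecMul continuous_const) (continuous_apply k)

theorem isCompact_absProbSeqUpTo (A : ℕ → Matrix ι ι ℝ) (m : ℕ) :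
    IsCompact (absProbSeqUpTo A m) :=
  (isCompact_univ_pi fun _ => isCompact_stdSimplex ℝ ι).of_isClosed_subset
    (isClosed_absProbSeqUpTo A m) inter_subset_left

theorem exists_absProbSeq [DecidableEq ι] [Nonempty ι] {A : ℕ → Matrix ι ι ℝ}
    (hA : ∀ k, A k ∈ rowStochastic ℝ ι) :
    ∃ π : ℕ → ι → ℝ, (∀ k, π k ∈ stdSimplex ℝ ι) ∧ ∀ k, π (k + 1) ᵥ* A k = π k := by
  obtain ⟨π, hπ⟩ := IsCompact.nonempty_iInter_of_sequence_nonempty_isCompact_isClosed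
    (absProbSeqUpTo A) (absProbSeqUpTo_succ_subset A)
    (fun m => ⟨_, backwardIterate_mem_absProbSeqUpTo hA stdSimplex.barycenter.2 m⟩)
    (isCompact_absProbSeqUpTo A 0) (isClosed_absProbSeqUpTo A)
  rw [mem_iInter] at hπ
  exact ⟨π, fun k => (hπ 0).1 k (mem_univ k), fun k => (hπ (k + 1)).2 k k.lt_succ_self⟩

end Topology

/-- **Existence of an absolute probability sequence (Lemma 4 of the paper,
Theorem 4.2 in Touri–Nedić).** For every sequence `{A(k)}` of `n×n` row-stochastic
matrices there exists a sequence of stochastic vectors `{π(k)}` such that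
`π(k+1)ᵀ A(k) = π(k)ᵀ` for all `k`. -/
theorem exists_absolute_probability_sequence (n : ℕ) (hn : 0 < n)
    (A : ℕ → Matrix (Fin n) (Fin n) ℝ)
    (hnonneg : ∀ k i j, 0 ≤ A k i j)
    (hrow : ∀ k i, ∑ j, A k i j = 1) :
    ∃ π : ℕ → Fin n → ℝ,
      (∀ k i, 0 ≤ π k i) ∧ (∀ k, ∑ i, π k i = 1) ∧
      (∀ k, Matrix.vecMul (π (k + 1)) (A k) = π k) := by
  have : NeZero n := ⟨hn.ne'⟩
  obtain ⟨π, hπ, hrel⟩ :=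
    exists_absProbSeq fun k => mem_rowStochastic_iff_sum.2 ⟨hnonneg k, hrow k⟩
  exact ⟨π, fun k => (hπ k).1, fun k => (hπ k).2, hrel⟩
end
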